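/- arXiv:2103.11535 — 2 statements merged into one kernel-verified Lean document; each statement's English description precedes it below -/
import Mathlib

section
/- Let G be a finite abelian group, I the augmentation ideal of Z[G], and r ≥ 1. Then the quotient I^r/I^{r+1} is a finite abelian group annihilated by #G; more precisely, there is a natural surjection from the r-th symmetric power Sym^r(G) onto I^r/I^{r+1} induced by (g_1,...,g_r) -> (g_1-1)···(g_r-1). -/
open Pointwise


/-- The augmentation map `R[G] → R` sending every group element to `1`. -/
noncomputable def aug (R : Type*) [CommRing R] (G : Type*) [CommGroup G] :
    MonoidAlgebra R G →+* R :=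
  ((MonoidAlgebra.lift R R G) 1).toRingHom

/-- The augmentation ideal of `R[G]`. -/
noncomputable def augIdeal (R : Type*) [CommRing R] (G : Type*) [CommGroup G] :
    Ideal (MonoidAlgebra R G) :=
  RingHom.ker (aug R G)

section helpers

variable {G : Type*} [CommGroup G]

lemma sub_one_mem_aug (g : G) : MonoidAlgebra.of ℤ G g - 1 ∈ augIdeal ℤ G := by
  simp [augIdeal, RingHom.mem_ker, aug, map_sub, MonoidAlgebra.lift_of]

lemma aug_apply (f : MonoidAlgebra ℤ G) : aug ℤ G f = f.coeff.sum fun _ m => m := by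
  simp [aug, MonoidAlgebra.lift_apply]

lemma augIdeal_eq_span :
    augIdeal ℤ G = Ideal.span {x | ∃ g : G, x = MonoidAlgebra.of ℤ G g - 1} := by
  apply le_antisymm
  · intro f hf
    have hf0 : aug ℤ G f = 0 := hf
    have hrep : f = f.coeff.sum fun g m => m • (MonoidAlgebra.of ℤ G g - 1) := by
      have h1 : (f.coeff.sum fun g m => m • (MonoidAlgebra.of ℤ G g - 1))
          = (f.coeff.sum fun g m => m • (MonoidAlgebra.of ℤ G g)) - (f.coeff.sum fun g m => (m : MonoidAlgebra ℤ G)) := by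
        rw [← Finsupp.sum_sub]
        congr 1; ext g m
        rw [smul_sub]
        congr 1
        simp [zsmul_eq_mul]
      rw [h1]
      have h2 : (f.coeff.sum fun g m => m • (MonoidAlgebra.of ℤ G g)) = f := by
        conv_rhs => rw [← MonoidAlgebra.sum_coeff_single f]
        congr 1; ext g m
        simp [MonoidAlgebra.of_apply, MonoidAlgebra.smul_single']
      have h3 : (f.coeff.sum fun g m => (m : MonoidAlgebra ℤ G)) = 0 := by
        have := aug_apply f
        rw [hf0] at this
        have : (f.coeff.sum fun _ m => m) = 0 := this.symm
        calc (f.coeff.sum fun g m => (m : MonoidAlgebra ℤ G))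
            = ((f.coeff.sum fun _ m => m : ℤ) : MonoidAlgebra ℤ G) := by
              rw [Finsupp.sum, Finsupp.sum]; push_cast; rfl
          _ = 0 := by rw [this]; simp
      rw [h2, h3, sub_zero]
    rw [hrep]
    refine Submodule.sum_mem _ fun g _ => ?_
    show (f.coeff g) • (MonoidAlgebra.of ℤ G g - 1) ∈ _
    rw [zsmul_eq_mul]
    exact Ideal.mul_mem_left _ _ (Ideal.subset_span ⟨g, rfl⟩)
  · rw [Ideal.span_le]
    rintro x ⟨g, rfl⟩
    exact sub_one_mem_aug g

lemma prod_mem_pow {r : ℕ} (g : Fin r → G) :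
    (∏ i, (MonoidAlgebra.of ℤ G (g i) - 1)) ∈ augIdeal ℤ G ^ r := by
  induction r with
  | zero => simp
  | succ s ih =>
    rw [Fin.prod_univ_succ, pow_succ, mul_comm (augIdeal ℤ G ^ s)]
    exact Ideal.mul_mem_mul (sub_one_mem_aug _) (ih _)

end helpers

set_option maxHeartbeats 1600000 in
/-- For a finite abelian group `G` and `r ≥ 1`, the quotient `I^r/I^{r+1}` (realized as
the image of `I^r` in `ℤ[G]/I^{r+1}`) is a finite abelian group annihilated by `#G`,
and every element lies in the subgroup generated by the classes of the products
`(g₁-1)⋯(g_r-1)`; i.e. the natural map from `Sym^r(G)` induced by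
`(g₁,…,g_r) ↦ (g₁-1)⋯(g_r-1)` is surjective. -/
theorem stmt4 (G : Type*) [CommGroup G] [Fintype G] (r : ℕ) (hr : 1 ≤ r) :
    Finite ((augIdeal ℤ G ^ r).map (Ideal.Quotient.mk (augIdeal ℤ G ^ (r + 1)))) ∧
    (∀ x : MonoidAlgebra ℤ G ⧸ augIdeal ℤ G ^ (r + 1),
      x ∈ (augIdeal ℤ G ^ r).map (Ideal.Quotient.mk (augIdeal ℤ G ^ (r + 1))) →
        Fintype.card G • x = 0) ∧
    (∀ x : MonoidAlgebra ℤ G ⧸ augIdeal ℤ G ^ (r + 1),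
      x ∈ (augIdeal ℤ G ^ r).map (Ideal.Quotient.mk (augIdeal ℤ G ^ (r + 1))) →
        x ∈ AddSubgroup.closure {y | ∃ g : Fin r → G,
          y = Ideal.Quotient.mk (augIdeal ℤ G ^ (r + 1))
                (∏ i, (MonoidAlgebra.of ℤ G (g i) - 1))}) := by
  classical
  set mk := Ideal.Quotient.mk (augIdeal ℤ G ^ (r + 1)) with hmkdef
  set S : Set (MonoidAlgebra ℤ G ⧸ augIdeal ℤ G ^ (r + 1)) :=
    {y | ∃ g : Fin r → G, y = mk (∏ i, (MonoidAlgebra.of ℤ G (g i) - 1))} with hSdef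
  set J := AddSubgroup.closure S with hJdef
  have hmk_gmul : ∀ (g : G) (t : MonoidAlgebra ℤ G), t ∈ augIdeal ℤ G ^ r →
      mk (MonoidAlgebra.of ℤ G g * t) = mk t := by
    intro g t ht
    rw [Ideal.Quotient.eq]
    have h1 : (MonoidAlgebra.of ℤ G g - 1) * t ∈ augIdeal ℤ G * augIdeal ℤ G ^ r :=
      Ideal.mul_mem_mul (sub_one_mem_aug g) ht
    rw [mul_comm (augIdeal ℤ G), ← pow_succ] at h1
    simpa [sub_mul] using h1
  have hkey : ∀ (c t : MonoidAlgebra ℤ G), t ∈ augIdeal ℤ G ^ r → mk t ∈ J → mk (c * t) ∈ J := by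
    intro c
    induction c using MonoidAlgebra.induction with
    | zero => intro t ht hJt; rw [zero_mul, map_zero]; exact zero_mem J
    | single_add g m f hg hm ih =>
      intro t ht hJt
      rw [add_mul, map_add]
      refine AddSubgroup.add_mem _ ?_ (ih t ht hJt)
      have hsingle : (MonoidAlgebra.single g m) * t
          = m • (MonoidAlgebra.of ℤ G g * t) := by
        rw [← smul_mul_assoc]
        congr 1
        rw [MonoidAlgebra.of_apply, MonoidAlgebra.smul_single']
        simp
      rw [hsingle, map_zsmul, hmk_gmul g t ht]
      exact AddSubgroup.zsmul_mem _ hJt _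
  have hIr : augIdeal ℤ G ^ r
      = Ideal.span ({x | ∃ g : G, x = MonoidAlgebra.of ℤ G g - 1} ^ r) := by
    rw [augIdeal_eq_span]; exact Submodule.span_pow _ r
  have hclaim3 : ∀ t ∈ augIdeal ℤ G ^ r, mk t ∈ J := by
    intro t ht
    have hspan : t ∈ Ideal.span ({x | ∃ g : G, x = MonoidAlgebra.of ℤ G g - 1} ^ r) := by
      rw [← hIr]; exact ht
    refine Submodule.span_induction ?_ ?_ ?_ ?_ hspan
    · intro x hx
      rw [Set.mem_pow] at hx
      obtain ⟨f, hf⟩ := hx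
      choose g hg using fun i => (f i).2
      have hx' : x = ∏ i, (MonoidAlgebra.of ℤ G (g i) - 1) := by
        rw [← hf, List.prod_ofFn]
        exact Finset.prod_congr rfl fun i _ => hg i
      exact AddSubgroup.subset_closure ⟨g, by rw [hx']⟩
    · rw [map_zero]; exact zero_mem J
    · intro x y _ _ hx hy
      rw [map_add]; exact AddSubgroup.add_mem _ hx hy
    · intro a x hx hJx
      have hxr : x ∈ augIdeal ℤ G ^ r := by
        rw [hIr]; exact hx
      rw [smul_eq_mul]
      exact hkey a x hxr hJx
  have hsub : ∀ (g : G) (m : ℕ),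
      MonoidAlgebra.of ℤ G (g ^ m) - 1 - m • (MonoidAlgebra.of ℤ G g - 1) ∈ augIdeal ℤ G ^ 2 := by
    intro g m
    induction m with
    | zero => simp [← MonoidAlgebra.one_def]
    | succ k ih =>
      have heq : MonoidAlgebra.of ℤ G (g ^ (k + 1)) - 1 - (k + 1) • (MonoidAlgebra.of ℤ G g - 1)
          = (MonoidAlgebra.of ℤ G (g ^ k) - 1) * (MonoidAlgebra.of ℤ G g - 1)
            + (MonoidAlgebra.of ℤ G (g ^ k) - 1 - k • (MonoidAlgebra.of ℤ G g - 1)) := by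
        rw [pow_succ, map_mul]
        simp only [nsmul_eq_mul]
        push_cast
        ring
      rw [heq]
      refine Submodule.add_mem _ ?_ ih
      rw [sq]
      exact Ideal.mul_mem_mul (sub_one_mem_aug _) (sub_one_mem_aug _)
  have hcard : ∀ g : G,
      Fintype.card G • (MonoidAlgebra.of ℤ G g - 1) ∈ augIdeal ℤ G ^ 2 := by
    intro g
    have h := hsub g (Fintype.card G)
    rw [pow_card_eq_one] at h
    rw [show (MonoidAlgebra.of ℤ G (1 : G)) = 1 from map_one _, sub_self, zero_sub] at h
    simpa using Submodule.neg_mem _ h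
  have hprod : ∀ g : Fin r → G,
      Fintype.card G • (∏ i, (MonoidAlgebra.of ℤ G (g i) - 1)) ∈ augIdeal ℤ G ^ (r + 1) := by
    intro g
    obtain ⟨s, rfl⟩ : ∃ s, r = s + 1 := ⟨r - 1, (Nat.succ_pred_eq_of_pos hr).symm⟩
    rw [Fin.prod_univ_succ, ← smul_mul_assoc]
    have h := Ideal.mul_mem_mul (hcard (g 0))
      (prod_mem_pow (G := G) (fun i : Fin s => g i.succ))
    rw [← pow_add] at h
    rw [show s + 1 + 1 = 2 + s from by omega]
    exact h
  have hkill : ∀ x ∈ J, Fintype.card G • x = 0 := by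
    intro x hx
    refine AddSubgroup.closure_induction ?_ ?_ ?_ ?_ hx
    · rintro y ⟨g, rfl⟩
      rw [← map_nsmul, Ideal.Quotient.eq_zero_iff_mem]
      exact hprod g
    · simp
    · intro a b _ _ ha hb
      rw [smul_add, ha, hb, add_zero]
    · intro a _ ha
      rw [smul_neg, ha, neg_zero]
  have hmem : ∀ x : MonoidAlgebra ℤ G ⧸ augIdeal ℤ G ^ (r + 1),
      x ∈ (augIdeal ℤ G ^ r).map mk → x ∈ J := by
    intro x hx
    obtain ⟨t, ht, rfl⟩ := (Ideal.mem_map_iff_of_surjective mk Ideal.Quotient.mk_surjective).mp hx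
    exact hclaim3 t ht
  refine ⟨?_, fun x hx => hkill x (hmem x hx), fun x hx => hmem x hx⟩
  -- Finiteness
  have hSfin : S.Finite := by
    have : S = Set.range (fun g : Fin r → G =>
        mk (∏ i, (MonoidAlgebra.of ℤ G (g i) - 1))) := by
      ext y
      constructor
      · rintro ⟨g, rfl⟩; exact ⟨g, rfl⟩
      · rintro ⟨g, rfl⟩; exact ⟨g, rfl⟩
    rw [this]
    exact Set.finite_range _
  have : Finite ↥S := hSfin.to_subtype
  have hJfg : AddGroup.FG ↥J := AddGroup.closure_finite_fg S
  have hJtor : AddMonoid.IsTorsion ↥J := by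
    intro x
    rw [isOfFinAddOrder_iff_nsmul_eq_zero]
    refine ⟨Fintype.card G, Fintype.card_pos, ?_⟩
    apply Subtype.ext
    show Fintype.card G • (x : MonoidAlgebra ℤ G ⧸ augIdeal ℤ G ^ (r + 1)) = 0
    exact hkill _ x.2
  have hJfin : Finite ↥J := AddCommGroup.finite_of_fg_torsion ↥J hJtor
  have hJset : (J : Set (MonoidAlgebra ℤ G ⧸ augIdeal ℤ G ^ (r + 1))).Finite :=
    Set.finite_coe_iff.mpr hJfin
  have hsubset : (((augIdeal ℤ G ^ r).map mk : Ideal _) :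
      Set (MonoidAlgebra ℤ G ⧸ augIdeal ℤ G ^ (r + 1))) ⊆ (J : Set _) :=
    fun x hx => hmem x hx
  exact (hJset.subset hsubset).to_subtype
end

section
/- Let G be a finite abelian group with Sylow p-subgroup G_p, and let π: Z_p[G] -> Z_p[G_p] be the map induced by the projection G -> G_p. Write I and I_p for the augmentation ideals of Z_p[G] and Z_p[G_p] respectively. Then for every r ≥ 1, π induces an isomorphism I^r/I^{r+1} ≃ I_p^r/I_p^{r+1}. -/
/-!
The kernel of `π` is generated by the elements `(1, h) - 1` with `h ∈ H`, and each of them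
lies in every power of `I`: modulo `Iⁿ` the element `y = (1, h) - 1` is nilpotent, while
`(1 + y) ^ |H| = 1` and `|H|` is a unit in `ℤ_p`, which forces `y = 0`. Hence
`ker π ⊆ I^{r+1}`, and since `π` is surjective with `π(I) = I_p`, it induces a ring isomorphism
`ℤ_p[G]/I^{r+1} ≃ ℤ_p[G_p]/I_p^{r+1}` carrying the image of `I^r` onto that of `I_p^r`.
-/

open MonoidAlgebra Function

theorem eq_one_of_pow_eq_one_of_isNilpotent_sub_one {A : Type*} [CommRing A] {x : A} {N : ℕ}
    (hx : IsNilpotent (x - 1)) (hN : IsUnit (N : A)) (hxN : x ^ N = 1) : x = 1 := by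
  have hsum : IsUnit (∑ i ∈ Finset.range N, x ^ i) := by
    have hnil : IsNilpotent (∑ i ∈ Finset.range N, (x ^ i - 1)) :=
      isNilpotent_sum fun i _ => by
        obtain ⟨c, hc⟩ := sub_one_dvd_pow_sub_one x i
        rw [hc]
        exact Commute.isNilpotent_mul_right (Commute.all _ _) hx
    have hsplit : ∑ i ∈ Finset.range N, x ^ i = N + ∑ i ∈ Finset.range N, (x ^ i - 1) := by
      simp [Finset.sum_sub_distrib]
    rw [hsplit]
    exact hnil.isUnit_add_left_of_commute hN (Commute.all _ _)
  have hzero : (∑ i ∈ Finset.range N, x ^ i) * (x - 1) = 0 := by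
    rw [geom_sum_mul, hxN, sub_self]
  exact sub_eq_zero.mp (hsum.mul_right_eq_zero.mp hzero)

theorem PadicInt.isUnit_natCast_of_not_dvd {p : ℕ} [Fact p.Prime] {n : ℕ} (h : ¬ p ∣ n) :
    IsUnit (n : ℤ_[p]) := by
  rw [PadicInt.isUnit_iff, PadicInt.norm_natCast_eq_one_iff]
  exact (Nat.Prime.coprime_iff_not_dvd Fact.out).2 h

theorem MonoidAlgebra.mapDomainRingHom_surjective {R M N : Type*} [Semiring R] [Monoid M]
    [Monoid N] {f : M →* N} (hf : Surjective f) : Surjective (mapDomainRingHom R f) := by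
  intro y
  induction y using MonoidAlgebra.induction_linear with
  | zero => exact ⟨0, map_zero _⟩
  | add y y' hy hy' =>
    obtain ⟨⟨x, rfl⟩, ⟨x', rfl⟩⟩ := And.intro hy hy'
    exact ⟨x + x', map_add _ x x'⟩
  | single n b =>
    obtain ⟨m, rfl⟩ := hf n
    exact ⟨single m b, by simp⟩

section Augmentation

variable {R : Type*} [CommRing R] {G K : Type*} [CommGroup G] [CommGroup K]

theorem aug_single (g : G) (b : R) : aug R G (single g b) = b := by
  simp [aug, lift_single]

theorem of_sub_one_mem_augIdeal (g : G) : of R G g - 1 ∈ augIdeal R G := by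
  simp [augIdeal, aug_single]

theorem aug_comp_mapDomainRingHom (f : G →* K) :
    (aug R K).comp (mapDomainRingHom R f) = aug R G := by
  refine RingHom.ext fun x => ?_
  induction x using MonoidAlgebra.induction_linear with
  | zero => simp
  | add x y hx hy => simp only [RingHom.comp_apply, map_add] at *; rw [hx, hy]
  | single g b => simp [aug_single]

theorem map_augIdeal_of_surjective {f : G →* K} (hf : Surjective f) :
    (augIdeal R G).map (mapDomainRingHom R f) = augIdeal R K := by
  rw [augIdeal, augIdeal, ← aug_comp_mapDomainRingHom f, ← RingHom.comap_ker,
    Ideal.map_comap_of_surjective _ (mapDomainRingHom_surjective hf)]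

theorem of_sub_one_mem_augIdeal_pow {g : G} {N : ℕ} (hg : g ^ N = 1) (hN : IsUnit (N : R))
    (n : ℕ) : of R G g - 1 ∈ augIdeal R G ^ n := by
  set q := Ideal.Quotient.mk (augIdeal R G ^ n)
  rw [← Ideal.Quotient.eq_zero_iff_mem, map_sub, map_one, sub_eq_zero]
  refine eq_one_of_pow_eq_one_of_isNilpotent_sub_one (N := N) ⟨n, ?_⟩ ?_ ?_
  · rw [← map_one q, ← map_sub, ← map_pow, Ideal.Quotient.eq_zero_iff_mem]
    exact Ideal.pow_mem_pow (of_sub_one_mem_augIdeal g) n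
  · simpa using hN.map (q.comp (algebraMap R (MonoidAlgebra R G)))
  · rw [← map_pow, ← map_pow, hg, map_one, map_one]

end Augmentation

section Product

variable {R G H : Type*} [Ring R] [Monoid G] [Monoid H]

theorem sub_mapDomainRingHom_inl_fst_mem {J : Ideal (MonoidAlgebra R (G × H))}
    (hJ : ∀ h : H, of R (G × H) (1, h) - 1 ∈ J) (x : MonoidAlgebra R (G × H)) :
    x - mapDomainRingHom R (MonoidHom.inl G H) (mapDomainRingHom R (MonoidHom.fst G H) x) ∈
      J := by
  induction x using MonoidAlgebra.induction_linear with
  | zero => simp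
  | add x y hx hy => simpa only [map_add, add_sub_add_comm] using J.add_mem hx hy
  | single a b =>
    have hfactor : single a b - single (a.1, 1) b =
        single (a.1, 1) b * (of R (G × H) (1, a.2) - 1) := by
      simp [mul_sub, single_mul_single]
    simpa [hfactor] using J.mul_mem_left _ (hJ a.2)

theorem ker_mapDomainRingHom_fst_le {J : Ideal (MonoidAlgebra R (G × H))}
    (hJ : ∀ h : H, of R (G × H) (1, h) - 1 ∈ J) :
    RingHom.ker (mapDomainRingHom R (MonoidHom.fst G H)) ≤ J := by
  intro x hx
  simpa [RingHom.mem_ker.mp hx] using sub_mapDomainRingHom_inl_fst_mem hJ x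

end Product

namespace Ideal

theorem exists_addEquiv_map_mk_of_surjective {A B : Type*} [CommRing A] [CommRing B]
    {f : A →+* B} (hf : Surjective f) {K : Ideal A} {L : Ideal B} (hK : RingHom.ker f ≤ K)
    (hKL : K.map f = L) {M : Ideal A} {N : Ideal B} (hMN : M.map f = N) :
    ∃ e : M.map (Quotient.mk K) ≃+ N.map (Quotient.mk L),
      ∀ (x : A) (hx : x ∈ M),
        (e ⟨Quotient.mk K x, mem_map_of_mem _ hx⟩ : B ⧸ L) = Quotient.mk L (f x) := by
  subst hKL hMN
  have hinj : (K.map f).comap f ≤ K := by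
    rw [comap_map_of_surjective f hf]
    exact sup_le le_rfl hK
  let φ : A ⧸ K ≃+* B ⧸ K.map f := RingEquiv.ofBijective (quotientMap _ f le_comap_map)
    ⟨quotientMap_injective' hinj, quotientMap_surjective hf⟩
  have hφ : (φ : A ⧸ K →+* B ⧸ K.map f).comp (Quotient.mk K) = (Quotient.mk _).comp f :=
    RingHom.ext fun _ => rfl
  have hmap : (M.map (Quotient.mk K)).map φ = (M.map f).map (Quotient.mk _) := by
    rw [← map_coe φ, map_map, hφ, ← map_map]
  have hmem : ∀ z, z ∈ M.map (Quotient.mk K) ↔ φ z ∈ (M.map f).map (Quotient.mk _) := by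
    intro z
    rw [← hmap, ← comap_symm, mem_comap, RingEquiv.symm_apply_apply]
  exact ⟨{ (φ : A ⧸ K ≃ B ⧸ K.map f).subtypeEquiv hmem with
    map_add' := fun z w => Subtype.ext (map_add φ (z : A ⧸ K) w) }, fun x hx => rfl⟩

end Ideal

theorem stmt5_general (p : ℕ) [Fact p.Prime] (Gp H : Type*) [CommGroup Gp] [CommGroup H]
    [Fintype H] (hH : ¬ p ∣ Fintype.card H)
    (r : ℕ) :
    ∃ e : ((augIdeal ℤ_[p] (Gp × H) ^ r).map
            (Ideal.Quotient.mk (augIdeal ℤ_[p] (Gp × H) ^ (r + 1)))) ≃+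
          ((augIdeal ℤ_[p] Gp ^ r).map
            (Ideal.Quotient.mk (augIdeal ℤ_[p] Gp ^ (r + 1)))),
      ∀ (x : MonoidAlgebra ℤ_[p] (Gp × H)) (hx : x ∈ augIdeal ℤ_[p] (Gp × H) ^ r),
        (e ⟨Ideal.Quotient.mk _ x, Ideal.mem_map_of_mem _ hx⟩ :
            MonoidAlgebra ℤ_[p] Gp ⧸ augIdeal ℤ_[p] Gp ^ (r + 1))
          = Ideal.Quotient.mk _
              (MonoidAlgebra.mapDomainRingHom ℤ_[p] (MonoidHom.fst Gp H) x) := by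
  have hmap : (augIdeal ℤ_[p] (Gp × H)).map (mapDomainRingHom ℤ_[p] (MonoidHom.fst Gp H)) =
      augIdeal ℤ_[p] Gp :=
    map_augIdeal_of_surjective Prod.fst_surjective
  have hker : RingHom.ker (mapDomainRingHom ℤ_[p] (MonoidHom.fst Gp H)) ≤
      augIdeal ℤ_[p] (Gp × H) ^ (r + 1) :=
    ker_mapDomainRingHom_fst_le fun h =>
      of_sub_one_mem_augIdeal_pow (by simp [pow_card_eq_one])
        (PadicInt.isUnit_natCast_of_not_dvd hH) _
  exact Ideal.exists_addEquiv_map_mk_of_surjective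
    (mapDomainRingHom_surjective Prod.fst_surjective) hker
    (by rw [Ideal.map_pow, hmap]) (by rw [Ideal.map_pow, hmap])

/-- Let `G = Gp × H` be a finite abelian group with `Gp` its Sylow `p`-subgroup (a
`p`-group) and `H` of order prime to `p`.  Let `π : ℤ_p[G] → ℤ_p[Gp]` be induced by the
projection `G → Gp`.  Then for every `r ≥ 1`, `π` induces an isomorphism
`I^r/I^{r+1} ≃ I_p^r/I_p^{r+1}`, where `I` and `I_p` are the augmentation ideals of
`ℤ_p[G]` and `ℤ_p[Gp]`, and the quotients are realized as images in `ℤ_p[−]/I^{r+1}`. -/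
theorem stmt5 (p : ℕ) [Fact p.Prime] (Gp H : Type*) [CommGroup Gp] [CommGroup H]
    [Fintype Gp] [Fintype H] (hGp : IsPGroup p Gp) (hH : ¬ p ∣ Fintype.card H)
    (r : ℕ) (hr : 1 ≤ r) :
    ∃ e : ((augIdeal ℤ_[p] (Gp × H) ^ r).map
            (Ideal.Quotient.mk (augIdeal ℤ_[p] (Gp × H) ^ (r + 1)))) ≃+
          ((augIdeal ℤ_[p] Gp ^ r).map
            (Ideal.Quotient.mk (augIdeal ℤ_[p] Gp ^ (r + 1)))),
      ∀ (x : MonoidAlgebra ℤ_[p] (Gp × H)) (hx : x ∈ augIdeal ℤ_[p] (Gp × H) ^ r),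
        (e ⟨Ideal.Quotient.mk _ x, Ideal.mem_map_of_mem _ hx⟩ :
            MonoidAlgebra ℤ_[p] Gp ⧸ augIdeal ℤ_[p] Gp ^ (r + 1))
          = Ideal.Quotient.mk _
              (MonoidAlgebra.mapDomainRingHom ℤ_[p] (MonoidHom.fst Gp H) x) :=
  stmt5_general p Gp H hH r
end
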